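/- Let Γ be a basic game that has a potential Φ_θ in each state θ, and let I = (γ, T, π) be an information structure. Then the function Φ_π(ŷ) = Σ_θ Σ_τ p(θ) π(τ|θ) Φ_θ(y(τ)) is a potential for the auxiliary multi-population game: for every population k, type τ^k, and action a, the partial derivative of Φ_π with respect to the variable y_a^k(τ^k) equals the auxiliary cost C_a^{k,τ^k}(ŷ) = Σ_θ Σ_{τ^{-k}} p(θ) π(τ^k, τ^{-k} | θ) c_a(y(τ), θ). -/

import Mathlib

noncomputable section

namespace NonatomicGames

/-- An information structure: finitely many populations with sizes summing to one,
a finite type set per population, and a signal distribution `π θ` for each state. -/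
structure InfoStructure (Θ : Type) where
  K : Type
  [instFintypeK : Fintype K]
  [instDecEqK : DecidableEq K]
  T : K → Type
  [instFintypeT : ∀ k, Fintype (T k)]
  [instDecEqT : ∀ k, DecidableEq (T k)]
  γ : K → ℝ
  γ_pos : ∀ k, 0 < γ k
  γ_sum : ∑ k, γ k = 1
  π : Θ → (∀ k, T k) → ℝ
  π_nonneg : ∀ θ τ, 0 ≤ π θ τ
  π_sum : ∀ θ, ∑ τ, π θ τ = 1

attribute [instance] InfoStructure.instFintypeK InfoStructure.instDecEqK
  InfoStructure.instFintypeT InfoStructure.instDecEqT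

/-- A direct information structure: the type set of each population is the action set `A`. -/
structure DirectInfoStructure (A Θ : Type) [Fintype A] [DecidableEq A] where
  K : Type
  [instFintypeK : Fintype K]
  [instDecEqK : DecidableEq K]
  γ : K → ℝ
  γ_pos : ∀ k, 0 < γ k
  γ_sum : ∑ k, γ k = 1
  π : Θ → (K → A) → ℝ
  π_nonneg : ∀ θ τ, 0 ≤ π θ τ
  π_sum : ∀ θ, ∑ τ, π θ τ = 1

attribute [instance] DirectInfoStructure.instFintypeK DirectInfoStructure.instDecEqK

open MeasureTheory Finset

variable {A Θ : Type} [Fintype A] [DecidableEq A] [Fintype Θ]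

/-- The information structure associated with a direct information structure. -/
def DirectInfoStructure.toInfo (I : DirectInfoStructure A Θ) : InfoStructure Θ where
  K := I.K
  instFintypeK := I.instFintypeK
  instDecEqK := I.instDecEqK
  T := fun _ => A
  instFintypeT := fun _ => inferInstanceAs (Fintype A)
  instDecEqT := fun _ => inferInstanceAs (DecidableEq A)
  γ := I.γ
  γ_pos := I.γ_pos
  γ_sum := I.γ_sum
  π := I.π
  π_nonneg := I.π_nonneg
  π_sum := I.π_sum

/-- The obedient interim flow profile of a direct information structure:
population `k` receiving recommendation `t` puts all its mass `γ k` on action `t`. -/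
def DirectInfoStructure.obedient (I : DirectInfoStructure A Θ) :
    ∀ _k : I.K, A → A → ℝ :=
  fun k t a => if t = a then I.γ k else 0

/-- `yhat` is an interim flow profile: nonnegative flows summing to the population sizes. -/
def IsInterim (I : InfoStructure Θ) (yhat : ∀ k, I.T k → A → ℝ) : Prop :=
  (∀ k t a, 0 ≤ yhat k t a) ∧ ∀ k t, ∑ a, yhat k t a = I.γ k

/-- The interim total flow profile given the type profile `τ`. -/
def totalFlow (I : InfoStructure Θ) (yhat : ∀ k, I.T k → A → ℝ) (τ : ∀ k, I.T k) :
    A → ℝ :=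
  fun a => ∑ k, yhat k (τ k) a

/-- The total probability `P(τᵏ)` of type `tk` for population `k`. -/
def typeProb (I : InfoStructure Θ) (p : Θ → ℝ) (k : I.K) (tk : I.T k) : ℝ :=
  ∑ θ, ∑ τ : ∀ j, I.T j, if τ k = tk then p θ * I.π θ τ else 0

/-- Bayesian Wardrop ε-equilibrium of the basic game `(p, c)` extended with `I`. -/
def IsBWEps (I : InfoStructure Θ) (p : Θ → ℝ) (c : A → (A → ℝ) → Θ → ℝ) (ε : ℝ)
    (yhat : ∀ k, I.T k → A → ℝ) : Prop :=
  IsInterim I yhat ∧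
  ∀ (k : I.K) (tk : I.T k), 0 < typeProb I p k tk →
    ∀ a b : A, 0 < yhat k tk a →
      (∑ θ, ∑ τ : ∀ j, I.T j,
        if τ k = tk then
          p θ * I.π θ τ * (c a (totalFlow I yhat τ) θ - c b (totalFlow I yhat τ) θ)
        else 0)
      ≤ ε * typeProb I p k tk

/-- The outcome (state-dependent distribution over flow profiles) induced by `yhat`. -/
def outcomeMeasure (I : InfoStructure Θ) (yhat : ∀ k, I.T k → A → ℝ) (θ : Θ) :
    Measure (A → ℝ) :=
  ∑ τ : ∀ k, I.T k, ENNReal.ofReal (I.π θ τ) • Measure.dirac (totalFlow I yhat τ)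

/-- The probability that the induced outcome puts on the flow profile `z` in state `θ`. -/
def outcomeWeight (I : InfoStructure Θ) (yhat : ∀ k, I.T k → A → ℝ) (θ : Θ)
    (z : A → ℝ) : ℝ :=
  ∑ τ : ∀ k, I.T k, if totalFlow I yhat τ = z then I.π θ τ else 0

/-- The auxiliary (non-normalized interim) cost `C_a^{k,τᵏ}(yhat)`. -/
def auxCost (I : InfoStructure Θ) (p : Θ → ℝ) (c : A → (A → ℝ) → Θ → ℝ)
    (yhat : ∀ k, I.T k → A → ℝ) (k : I.K) (tk : I.T k) (a : A) : ℝ :=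
  ∑ θ, ∑ τ : ∀ j, I.T j,
    if τ k = tk then p θ * I.π θ τ * c a (totalFlow I yhat τ) θ else 0

/-- The potential `Φ_π` of the auxiliary multi-population game. -/
def potPi (I : InfoStructure Θ) (p : Θ → ℝ) (Φ : Θ → (A → ℝ) → ℝ)
    (yhat : ∀ k, I.T k → A → ℝ) : ℝ :=
  ∑ θ, ∑ τ : ∀ k, I.T k, p θ * I.π θ τ * Φ θ (totalFlow I yhat τ)

/-- The social cost `SC(y, θ) = Σ_a y_a c_a(y, θ)`. -/
def socialCost (c : A → (A → ℝ) → Θ → ℝ) (y : A → ℝ) (θ : Θ) : ℝ :=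
  ∑ a, y a * c a y θ

/-- The total cost `TC(yhat)`. -/
def totalCost (I : InfoStructure Θ) (p : Θ → ℝ) (c : A → (A → ℝ) → Θ → ℝ)
    (yhat : ∀ k, I.T k → A → ℝ) : ℝ :=
  ∑ k, ∑ tk : I.T k, ∑ a, yhat k tk a * auxCost I p c yhat k tk a

/-- An outcome: a state-dependent Borel probability measure supported on the simplex `Y`. -/
def IsOutcome (μ : Θ → Measure (A → ℝ)) : Prop :=
  (∀ θ, IsProbabilityMeasure (μ θ)) ∧ ∀ θ, μ θ (stdSimplex ℝ A)ᶜ = 0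

/-- Bayes correlated Wardrop equilibrium of the basic game `(p, c)`. -/
def IsBCWE (p : Θ → ℝ) (c : A → (A → ℝ) → Θ → ℝ) (μ : Θ → Measure (A → ℝ)) : Prop :=
  IsOutcome μ ∧
  ∀ a b : A,
    ∑ θ, p θ * ∫ y, y a * c a y θ ∂(μ θ) ≤ ∑ θ, p θ * ∫ y, y a * c b y θ ∂(μ θ)

/-- `Φ` is a (state-by-state) potential for the cost profile `c`: for each state it is
continuously differentiable on an open neighborhood of the simplex and its partial
derivative in the direction of each action `a` is the cost of `a`. -/
def IsPotential (c : A → (A → ℝ) → Θ → ℝ) (Φ : Θ → (A → ℝ) → ℝ) : Prop :=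
  ∀ θ, ∃ U : Set (A → ℝ), IsOpen U ∧ stdSimplex ℝ A ⊆ U ∧
    ContDiffOn ℝ 1 (Φ θ) U ∧
    ∀ y ∈ stdSimplex ℝ A, ∀ a, fderiv ℝ (Φ θ) y (Pi.single a 1) = c a y θ

omit [DecidableEq A] [Fintype Θ] in
theorem totalFlow_mem_stdSimplex {I : InfoStructure Θ} {yhat : ∀ k, I.T k → A → ℝ}
    (h : IsInterim I yhat) (τ : ∀ k, I.T k) : totalFlow I yhat τ ∈ stdSimplex ℝ A := by
  refine ⟨fun b => sum_nonneg fun j _ => h.1 j (τ j) b, ?_⟩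
  calc ∑ b, totalFlow I yhat τ b = ∑ j, ∑ b, yhat j (τ j) b := sum_comm
    _ = ∑ j, I.γ j := by simp only [h.2]
    _ = 1 := I.γ_sum

omit [Fintype A] [DecidableEq A] [Fintype Θ] in
def totalFlowCLM (I : InfoStructure Θ) (τ : ∀ k, I.T k) :
    (∀ k, I.T k → A → ℝ) →L[ℝ] (A → ℝ) :=
  ∑ j, (ContinuousLinearMap.proj (R := ℝ) (φ := fun _ => A → ℝ) (τ j)).comp
    (ContinuousLinearMap.proj (R := ℝ) (φ := fun j => I.T j → A → ℝ) j)

omit [Fintype A] [DecidableEq A] [Fintype Θ] in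
theorem totalFlowCLM_apply (I : InfoStructure Θ) (τ : ∀ k, I.T k)
    (yhat : ∀ k, I.T k → A → ℝ) : totalFlowCLM I τ yhat = totalFlow I yhat τ := by
  ext a
  simp [totalFlowCLM, totalFlow]

omit [Fintype A] [DecidableEq A] [Fintype Θ] in
theorem totalFlowCLM_single (I : InfoStructure Θ) (τ : ∀ k, I.T k) (k : I.K) (tk : I.T k)
    (v : A → ℝ) :
    totalFlowCLM I τ (Pi.single k (Pi.single tk v)) = if τ k = tk then v else 0 := by
  rw [totalFlowCLM_apply]
  ext a
  rw [totalFlow, sum_eq_single k (fun j _ hj => by simp [Pi.single_eq_of_ne hj])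
    (fun hk => absurd (mem_univ k) hk)]
  split_ifs with hτ <;> simp [hτ]

omit [Fintype Θ] in
theorem IsPotential.differentiableAt {c : A → (A → ℝ) → Θ → ℝ} {Φ : Θ → (A → ℝ) → ℝ}
    (hΦ : IsPotential c Φ) (θ : Θ) {y : A → ℝ} (hy : y ∈ stdSimplex ℝ A) :
    DifferentiableAt ℝ (Φ θ) y := by
  obtain ⟨U, hU, hYU, hΦU, -⟩ := hΦ θ
  exact (hΦU.contDiffAt (hU.mem_nhds (hYU hy))).differentiableAt one_ne_zero

omit [DecidableEq A] in
theorem hasFDerivAt_potPi (I : InfoStructure Θ) (p : Θ → ℝ) (Φ : Θ → (A → ℝ) → ℝ)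
    (yhat : ∀ k, I.T k → A → ℝ)
    (hΦ : ∀ θ τ, DifferentiableAt ℝ (Φ θ) (totalFlow I yhat τ)) :
    HasFDerivAt (potPi I p Φ)
      (∑ θ, ∑ τ : ∀ k, I.T k, (p θ * I.π θ τ) •
        (fderiv ℝ (Φ θ) (totalFlow I yhat τ)).comp (totalFlowCLM I τ)) yhat := by
  have hflow (τ) : HasFDerivAt (fun w => totalFlow I w τ) (totalFlowCLM I τ) yhat := by
    simpa only [← totalFlowCLM_apply] using (totalFlowCLM I τ).hasFDerivAt
  unfold potPi
  refine HasFDerivAt.fun_sum fun θ _ => HasFDerivAt.fun_sum fun τ _ => ?_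
  exact ((hΦ θ τ).hasFDerivAt.comp yhat (hflow τ)).const_mul _

theorem potPi_is_potential_general
    (p : Θ → ℝ)
    (c : A → (A → ℝ) → Θ → ℝ)
    (Φ : Θ → (A → ℝ) → ℝ) (hΦ : IsPotential c Φ)
    (I : InfoStructure Θ)
    (yhat : ∀ k, I.T k → A → ℝ) (h : IsInterim I yhat)
    (k : I.K) (tk : I.T k) (a : A) :
    DifferentiableAt ℝ (potPi I p Φ) yhat ∧
      fderiv ℝ (potPi I p Φ) yhat (Pi.single k (Pi.single tk (Pi.single a 1))) =
        auxCost I p c yhat k tk a := by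
  have hY := totalFlow_mem_stdSimplex h
  have hderiv := hasFDerivAt_potPi I p Φ yhat fun θ τ => hΦ.differentiableAt θ (hY τ)
  refine ⟨hderiv.differentiableAt, ?_⟩
  simp only [hderiv.fderiv, _root_.sum_apply, smul_apply,
    ContinuousLinearMap.comp_apply, totalFlowCLM_single, auxCost]
  refine sum_congr rfl fun θ _ => sum_congr rfl fun τ _ => ?_
  split_ifs
  · obtain ⟨-, -, -, -, hgrad⟩ := hΦ θ
    rw [hgrad _ (hY τ), smul_eq_mul]
  · simp

/-- `Φ_π` is a potential for the auxiliary multi-population game: its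
partial derivative with respect to `y_a^k(τᵏ)` is the auxiliary cost `C_a^{k,τᵏ}`. -/
theorem potPi_is_potential
    (p : Θ → ℝ) (hp_pos : ∀ θ, 0 < p θ) (hp_sum : ∑ θ, p θ = 1)
    (c : A → (A → ℝ) → Θ → ℝ)
    (hc : ∀ a θ, ContinuousOn (fun y => c a y θ) (stdSimplex ℝ A))
    (Φ : Θ → (A → ℝ) → ℝ) (hΦ : IsPotential c Φ)
    (I : InfoStructure Θ)
    (yhat : ∀ k, I.T k → A → ℝ) (h : IsInterim I yhat)
    (k : I.K) (tk : I.T k) (a : A) :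
    DifferentiableAt ℝ (potPi I p Φ) yhat ∧
      fderiv ℝ (potPi I p Φ) yhat (Pi.single k (Pi.single tk (Pi.single a 1))) =
        auxCost I p c yhat k tk a :=
  potPi_is_potential_general p c Φ hΦ I yhat h k tk a

end NonatomicGames
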